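/- Let μ be a locally finite Borel measure on ℝⁿ, let E ⊆ ℝⁿ be open and bounded with finite (classical) perimeter, and suppose for each x ∈ E there exists r_x > 0 with ℒ(B_{r_x}(x) ∩ E) = ½ℒ(B_{r_x}(x)). Assume the relative isoperimetric inequality min{ℒ(B_r(x)∩E), ℒ(B_r(x)∩E^c)}^{(n−1)/n} ≤ C₁ |D1_E|(B_r(x)) for all balls. Then μ(E) ≤ C ∫_{ℝⁿ} M₁μ d|D1_E|, where |D1_E| is the total variation (perimeter) measure of E and M₁μ(x) = sup_{r>0} r μ(B_r(x))/ℒ(B_r(x)). -/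

import Mathlib

open MeasureTheory
open scoped ENNReal

/-- The fractional maximal function `M_α μ(x) = sup_{r>0} r^α μ(B_r(x))/|B_r(x)|`. -/
noncomputable def fracMax (n : ℕ) (α : ℝ) (μ : Measure (EuclideanSpace ℝ (Fin n)))
    (x : EuclideanSpace ℝ (Fin n)) : ℝ≥0∞ :=
  ⨆ (r : ℝ) (_ : 0 < r),
    ENNReal.ofReal (r ^ α) * μ (Metric.ball x r) / volume (Metric.ball x r)

/-!
Cover `E` by the balls `B_{r_x}(x)` on which `E` has density `1/2` and extract a disjoint Vitali
subfamily `{B_j}` whose fourfold enlargements cover `E`. On a half-density ball both pieces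
`B ∩ E` and `B ∖ E` have measure `|B|/2`, so the relative isoperimetric inequality gives
`r_j^{n-1} ≲ P(B_j)`. Every point `y ∈ B_j` sees `4B_j` inside `B_{5r_j}(y)`, whence
`μ(4B_j) ≲ r_j^{n-1} M₁μ(y)`. Hence `μ(4B_j) ≲ P(B_j) · inf_{B_j} M₁μ ≤ ∫_{B_j} M₁μ dP`, and
summing over the disjoint `B_j` gives the claim.
-/

open Metric Set

theorem ENNReal.ofReal_pow_mul_rpow_sub_one_div {n : ℕ} (hn : 0 < n) {r : ℝ} (hr : 0 ≤ r)
    (a : ℝ≥0∞) :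
    (ENNReal.ofReal (r ^ n) * a) ^ (((n : ℝ) - 1) / n) =
      ENNReal.ofReal (r ^ (n - 1)) * a ^ (((n : ℝ) - 1) / n) := by
  have hβ : 0 ≤ ((n : ℝ) - 1) / n := div_nonneg (by simp [Nat.one_le_cast.2 hn]) n.cast_nonneg
  rw [ENNReal.mul_rpow_of_nonneg _ _ hβ, ENNReal.ofReal_rpow_of_nonneg (by positivity) hβ,
    ← Real.rpow_natCast, ← Real.rpow_mul hr, mul_div_cancel₀ _ (by positivity),
    ← Nat.cast_pred hn, Real.rpow_natCast]

theorem measure_inter_compl_eq_half {α : Type*} [MeasurableSpace α] {μ : Measure α}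
    {s t : Set α} (ht : MeasurableSet t) (hs : μ s ≠ ∞) (h : μ (s ∩ t) = μ s / 2) :
    μ (s ∩ tᶜ) = μ s / 2 := by
  have hsplit := measure_inter_add_sdiff (μ := μ) s ht
  rw [h, sdiff_eq] at hsplit
  conv_rhs at hsplit => rw [← ENNReal.add_halves (μ s)]
  exact (ENNReal.add_right_inj (ENNReal.div_ne_top hs two_ne_zero)).1 hsplit

theorem exists_radius_le_of_addHaar_ball_le {E : Type*} [NormedAddCommGroup E]
    [NormedSpace ℝ E] [FiniteDimensional ℝ E] [Nontrivial E] [MeasurableSpace E] [BorelSpace E]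
    (μ : Measure E) [μ.IsAddHaarMeasure] {M : ℝ≥0∞} (hM : M ≠ ∞) :
    ∃ R : ℝ, ∀ (x : E) (r : ℝ), 0 < r → μ (ball x r) ≤ M → r ≤ R := by
  refine ⟨max 1 (M / μ (ball 0 1)).toReal, fun x r hr hle => ?_⟩
  rcases le_or_gt r 1 with h | h
  · exact h.trans (le_max_left _ _)
  have hω₀ : μ (ball 0 1) ≠ 0 := (measure_ball_pos μ _ one_pos).ne'
  rw [μ.addHaar_ball_of_pos x hr, ← ENNReal.le_div_iff_mul_le (.inl hω₀)
    (.inl measure_ball_lt_top.ne), ENNReal.ofReal_le_iff_le_toReal (ENNReal.div_ne_top hM hω₀)]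
    at hle
  exact ((le_self_pow₀ h.le Module.finrank_pos.ne').trans hle).trans (le_max_right _ _)

theorem exists_countable_disjoint_balls_covering {X : Type*} [PseudoMetricSpace X]
    [TopologicalSpace.SeparableSpace X] {E : Set X} {r : X → ℝ} {R : ℝ}
    (hr : ∀ x ∈ E, 0 < r x) (hR : ∀ x ∈ E, r x ≤ R) :
    ∃ u ⊆ E, u.Countable ∧ u.PairwiseDisjoint (fun b => ball b (r b)) ∧
      E ⊆ ⋃ b ∈ u, closedBall b (4 * r b) := by
  obtain ⟨u, huE, hdisj, hcov⟩ :=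
    Vitali.exists_disjoint_subfamily_covering_enlargement_closedBall E id r R hR 4 (by norm_num)
  have hdisj' : u.PairwiseDisjoint fun b => ball b (r b) :=
    hdisj.mono fun _ => ball_subset_closedBall
  refine ⟨u, huE, hdisj'.countable_of_isOpen (fun _ _ => isOpen_ball)
    fun b hb => nonempty_ball.2 (hr b (huE hb)), hdisj', fun x hx => ?_⟩
  obtain ⟨b, hb, hsub⟩ := hcov x hx
  exact mem_biUnion hb (hsub (mem_closedBall_self (hr x hx).le))

section EuclideanSpace

variable {n : ℕ}

theorem pos_of_measure_ball_inter_eq_half {E : Set (EuclideanSpace ℝ (Fin n))}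
    {x : EuclideanSpace ℝ (Fin n)} (hx : x ∈ E) {r : ℝ} (hr : 0 < r)
    (h : volume (ball x r ∩ E) = volume (ball x r) / 2) : 0 < n := by
  rcases Nat.eq_zero_or_pos n with rfl | hn
  · rw [inter_eq_left.2 fun y _ => Subsingleton.elim x y ▸ hx] at h
    exact absurd h (ENNReal.half_lt_self (measure_ball_pos _ x hr).ne'
      measure_ball_lt_top.ne).ne'
  · exact hn

theorem volume_ball_euclideanSpace (x : EuclideanSpace ℝ (Fin n)) {r : ℝ} (hr : 0 < r) :
    volume (ball x r) =
      ENNReal.ofReal (r ^ n) * volume (ball (0 : EuclideanSpace ℝ (Fin n)) 1) := by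
  rw [Measure.addHaar_ball_of_pos volume x hr, finrank_euclideanSpace_fin]

theorem exists_radius_le_of_measure_ball_inter_eq_half (hn : 0 < n)
    {E : Set (EuclideanSpace ℝ (Fin n))} (hE : volume E ≠ ∞) {r : EuclideanSpace ℝ (Fin n) → ℝ}
    (hr : ∀ x ∈ E, 0 < r x)
    (hhalf : ∀ x ∈ E, volume (ball x (r x) ∩ E) = volume (ball x (r x)) / 2) :
    ∃ R : ℝ, ∀ x ∈ E, r x ≤ R := by
  have : Nonempty (Fin n) := Fin.pos_iff_nonempty.1 hn
  obtain ⟨R, hR⟩ := exists_radius_le_of_addHaar_ball_le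
    (volume : Measure (EuclideanSpace ℝ (Fin n))) (M := 2 * volume E)
    (ENNReal.mul_ne_top ENNReal.ofNat_ne_top hE)
  refine ⟨R, fun x hx => hR x (r x) (hr x hx) ?_⟩
  calc volume (ball x (r x)) = 2 * volume (ball x (r x) ∩ E) := by
        rw [hhalf x hx, ENNReal.mul_div_cancel two_ne_zero ENNReal.ofNat_ne_top]
    _ ≤ 2 * volume E := by gcongr; exact inter_subset_right

variable (μ : Measure (EuclideanSpace ℝ (Fin n)))

theorem le_fracMax (y : EuclideanSpace ℝ (Fin n)) {ρ : ℝ} (hρ : 0 < ρ) :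
    ENNReal.ofReal ρ * μ (ball y ρ) / volume (ball y ρ) ≤ fracMax n 1 μ y := by
  simpa only [fracMax, Real.rpow_one] using
    le_iSup₂ (f := fun ρ (_ : 0 < ρ) =>
      ENNReal.ofReal (ρ ^ (1 : ℝ)) * μ (ball y ρ) / volume (ball y ρ)) ρ hρ

theorem measure_ball_le_fracMax (hn : 0 < n) (y : EuclideanSpace ℝ (Fin n)) {ρ : ℝ}
    (hρ : 0 < ρ) :
    μ (ball y ρ) ≤ ENNReal.ofReal (ρ ^ (n - 1)) * volume (ball (0 : EuclideanSpace ℝ (Fin n)) 1)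
      * fracMax n 1 μ y := by
  have hρ₀ : ENNReal.ofReal ρ ≠ 0 := ENNReal.ofReal_ne_zero_iff.2 hρ
  have hvol : volume (ball y ρ) = ENNReal.ofReal ρ *
      (ENNReal.ofReal (ρ ^ (n - 1)) * volume (ball (0 : EuclideanSpace ℝ (Fin n)) 1)) := by
    rw [volume_ball_euclideanSpace y hρ, ← mul_assoc, ← ENNReal.ofReal_mul hρ.le, ← pow_succ',
      Nat.sub_add_cancel hn]
  have h := le_fracMax μ y hρ
  rw [ENNReal.div_le_iff_le_mul (.inl (measure_ball_pos _ y hρ).ne') (.inl measure_ball_lt_top.ne),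
    hvol] at h
  exact (ENNReal.mul_le_mul_iff_right hρ₀ ENNReal.ofReal_ne_top).1 (h.trans_eq (by ring))

theorem measure_closedBall_le_mul_iInf_fracMax (hn : 0 < n) (b : EuclideanSpace ℝ (Fin n))
    {r : ℝ} (hr : 0 < r) :
    μ (closedBall b (4 * r)) ≤ ENNReal.ofReal ((5 * r) ^ (n - 1)) *
      volume (ball (0 : EuclideanSpace ℝ (Fin n)) 1) * ⨅ y ∈ ball b r, fracMax n 1 μ y := by
  have h₀ : ENNReal.ofReal ((5 * r) ^ (n - 1)) * volume (ball (0 : EuclideanSpace ℝ (Fin n)) 1)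
      ≠ 0 := mul_ne_zero (ENNReal.ofReal_ne_zero_iff.2 (by positivity))
    (measure_ball_pos _ _ one_pos).ne'
  have htop : ENNReal.ofReal ((5 * r) ^ (n - 1)) * volume (ball (0 : EuclideanSpace ℝ (Fin n)) 1)
      ≠ ∞ := ENNReal.mul_ne_top ENNReal.ofReal_ne_top measure_ball_lt_top.ne
  simp_rw [ENNReal.mul_iInf_of_ne h₀ htop]
  refine le_iInf₂ fun y hy => (measure_mono (closedBall_subset_ball' ?_)).trans
    (measure_ball_le_fracMax μ hn y (by positivity : 0 < 5 * r))
  rw [mem_ball, dist_comm] at hy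
  linarith

variable {μ}

theorem ofReal_pow_mul_le_of_isoperimetric (hn : 0 < n) {E : Set (EuclideanSpace ℝ (Fin n))}
    (hE : MeasurableSet E) {P : Measure (EuclideanSpace ℝ (Fin n))} {C₁ : ℝ≥0∞}
    {x : EuclideanSpace ℝ (Fin n)} {r : ℝ} (hr : 0 < r)
    (hhalf : volume (ball x r ∩ E) = volume (ball x r) / 2)
    (hiso : (min (volume (ball x r ∩ E)) (volume (ball x r ∩ Eᶜ))) ^ (((n : ℝ) - 1) / n)
      ≤ C₁ * P (ball x r)) :
    ENNReal.ofReal (r ^ (n - 1)) *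
        (volume (ball (0 : EuclideanSpace ℝ (Fin n)) 1) / 2) ^ (((n : ℝ) - 1) / n)
      ≤ C₁ * P (ball x r) := by
  rwa [measure_inter_compl_eq_half hE measure_ball_lt_top.ne hhalf, hhalf, min_self,
    volume_ball_euclideanSpace x hr, mul_div_assoc,
    ENNReal.ofReal_pow_mul_rpow_sub_one_div hn hr.le] at hiso

/-- The factor `5 = 4 + 1` bounds the radius of a ball around any point of `B_r(x)` that contains
the Vitali enlargement `B̄_{4r}(x)`. -/
noncomputable def coveringConst (n : ℕ) (C₁ : ℝ≥0∞) : ℝ≥0∞ :=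
  ENNReal.ofReal (5 ^ (n - 1)) * volume (ball (0 : EuclideanSpace ℝ (Fin n)) 1) *
    (C₁ / (volume (ball (0 : EuclideanSpace ℝ (Fin n)) 1) / 2) ^ (((n : ℝ) - 1) / n))

theorem coveringConst_ne_top {C₁ : ℝ≥0∞} (hC₁ : C₁ ≠ ∞) : coveringConst n C₁ ≠ ∞ :=
  ENNReal.mul_ne_top (ENNReal.mul_ne_top ENNReal.ofReal_ne_top measure_ball_lt_top.ne)
    (ENNReal.div_ne_top hC₁ (ENNReal.rpow_pos (ENNReal.half_pos (measure_ball_pos _ _ one_pos).ne')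
      (ENNReal.div_ne_top measure_ball_lt_top.ne two_ne_zero)).ne')

theorem measure_closedBall_le_coveringConst_mul (hn : 0 < n) {E : Set (EuclideanSpace ℝ (Fin n))}
    (hE : MeasurableSet E) {P : Measure (EuclideanSpace ℝ (Fin n))} {C₁ : ℝ≥0∞}
    {x : EuclideanSpace ℝ (Fin n)} {r : ℝ} (hr : 0 < r)
    (hhalf : volume (ball x r ∩ E) = volume (ball x r) / 2)
    (hiso : (min (volume (ball x r ∩ E)) (volume (ball x r ∩ Eᶜ))) ^ (((n : ℝ) - 1) / n)
      ≤ C₁ * P (ball x r)) :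
    μ (closedBall x (4 * r)) ≤ coveringConst n C₁ * ∫⁻ y in ball x r, fracMax n 1 μ y ∂P := by
  set ω := volume (ball (0 : EuclideanSpace ℝ (Fin n)) 1)
  set c₀ := (ω / 2) ^ (((n : ℝ) - 1) / n)
  have hω₂ : ω / 2 ≠ ∞ := ENNReal.div_ne_top measure_ball_lt_top.ne two_ne_zero
  have hc₀ : c₀ ≠ 0 := (ENNReal.rpow_pos (ENNReal.half_pos (measure_ball_pos _ _ one_pos).ne')
    hω₂).ne'
  have hc₀' : c₀ ≠ ∞ := ENNReal.rpow_ne_top_of_ne_zero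
    (ENNReal.half_pos (measure_ball_pos _ _ one_pos).ne').ne' hω₂
  have hP : ENNReal.ofReal (r ^ (n - 1)) ≤ C₁ / c₀ * P (ball x r) := by
    rw [← ENNReal.mul_div_right_comm, ENNReal.le_div_iff_mul_le (.inl hc₀) (.inl hc₀')]
    exact ofReal_pow_mul_le_of_isoperimetric hn hE hr hhalf hiso
  calc μ (closedBall x (4 * r))
      ≤ ENNReal.ofReal ((5 * r) ^ (n - 1)) * ω * ⨅ y ∈ ball x r, fracMax n 1 μ y :=
        measure_closedBall_le_mul_iInf_fracMax μ hn x hr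
    _ = ENNReal.ofReal (5 ^ (n - 1)) * ω * ENNReal.ofReal (r ^ (n - 1)) *
          ⨅ y ∈ ball x r, fracMax n 1 μ y := by
        rw [mul_pow, ENNReal.ofReal_mul (by positivity)]
        ring
    _ ≤ ENNReal.ofReal (5 ^ (n - 1)) * ω * (C₁ / c₀ * P (ball x r)) *
          ⨅ y ∈ ball x r, fracMax n 1 μ y := by gcongr
    _ = coveringConst n C₁ * ((⨅ y ∈ ball x r, fracMax n 1 μ y) * P (ball x r)) := by
        rw [coveringConst]
        ring
    _ ≤ coveringConst n C₁ * ∫⁻ y in ball x r, fracMax n 1 μ y ∂P := by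
        gcongr
        exact iInf_mul_le_setLIntegral _ isOpen_ball.measurableSet

end EuclideanSpace

/-- Key covering estimate in the Meyers–Ziemer theorem: if `E` is open and bounded,
`P` is its perimeter measure `|D1_E|` (assumed to satisfy the relative isoperimetric
inequality), and every `x ∈ E` admits a ball where `E` has density `1/2`, then
`μ(E) ≤ C ∫ M₁μ dP`. -/
theorem measure_le_perimeter_integral (n : ℕ) (C₁ : ℝ≥0∞) (hC₁ : C₁ ≠ ⊤) :
    ∃ C : ℝ≥0∞, C ≠ ⊤ ∧
      ∀ (μ : Measure (EuclideanSpace ℝ (Fin n))) [IsLocallyFiniteMeasure μ]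
        (E : Set (EuclideanSpace ℝ (Fin n))), IsOpen E → Bornology.IsBounded E →
        ∀ (P : Measure (EuclideanSpace ℝ (Fin n))) [IsFiniteMeasure P],
        (∀ x ∈ E, ∃ r : ℝ, 0 < r ∧
            volume (Metric.ball x r ∩ E) = volume (Metric.ball x r) / 2) →
        (∀ (x : EuclideanSpace ℝ (Fin n)) (r : ℝ), 0 < r →
            (min (volume (Metric.ball x r ∩ E)) (volume (Metric.ball x r ∩ Eᶜ)))
                ^ (((n : ℝ) - 1) / n)
              ≤ C₁ * P (Metric.ball x r)) →
        μ E ≤ C * ∫⁻ x, fracMax n 1 μ x ∂P := by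
  refine ⟨coveringConst n C₁, coveringConst_ne_top hC₁, ?_⟩
  intro μ _ E hEo hEb P _ hdens hiso
  rcases E.eq_empty_or_nonempty with rfl | ⟨x₀, hx₀⟩
  · simp
  choose! r hr hhalf using hdens
  have hn : 0 < n := pos_of_measure_ball_inter_eq_half hx₀ (hr x₀ hx₀) (hhalf x₀ hx₀)
  obtain ⟨R, hR⟩ :=
    exists_radius_le_of_measure_ball_inter_eq_half hn hEb.measure_lt_top.ne hr hhalf
  obtain ⟨u, huE, hu, hdisj, hcov⟩ := exists_countable_disjoint_balls_covering hr hR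
  calc μ E ≤ μ (⋃ b ∈ u, closedBall b (4 * r b)) := measure_mono hcov
    _ ≤ ∑' b : u, μ (closedBall b (4 * r b)) := measure_biUnion_le μ hu _
    _ ≤ ∑' b : u, coveringConst n C₁ * ∫⁻ y in ball (b : EuclideanSpace ℝ (Fin n)) (r b),
          fracMax n 1 μ y ∂P := ENNReal.tsum_le_tsum fun b =>
        measure_closedBall_le_coveringConst_mul hn hEo.measurableSet (hr b (huE b.2))
          (hhalf b (huE b.2)) (hiso b (r b) (hr b (huE b.2)))
    _ = coveringConst n C₁ * ∫⁻ y in ⋃ b ∈ u, ball b (r b), fracMax n 1 μ y ∂P := by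
        rw [ENNReal.tsum_mul_left,
          lintegral_biUnion hu (fun _ _ => isOpen_ball.measurableSet) hdisj]
    _ ≤ coveringConst n C₁ * ∫⁻ y, fracMax n 1 μ y ∂P :=
        mul_le_mul_right (setLIntegral_le_lintegral _ _) _
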